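/- arXiv:1503.07383 — 2 statements merged into one kernel-verified Lean document; each statement's English description precedes it below -/
import Mathlib

section
/- Let m ≥ 1 and let ∞ > t₁ ≥ t₂ ≥ ⋯ ≥ t_{m+1} ≥ 0 be real numbers. Then the iterated integral ∫_{t₂}^{t₁} ds₁ ∫_{t₃}^{t₂} ds₂ ⋯ ∫_{t_{m+1}}^{t_m} ds_m ∏_{k=1}^{m} s_k e^{−s_k²/2} · ∏_{1≤j<k≤m} (s_j² − s_k²) equals the determinant of the (m+1)×(m+1) matrix M defined, with τ_j := t_{m+2−j} for j = 1,…,m+1 (so the columns correspond to t_{m+1}, t_m, …, t₁ in this order), by M_{ij} = e^{−τ_j²/2} τ_j^{2(i−1)} for 1 ≤ i ≤ m, and M_{m+1,j} = 1. -/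
/-!
By the Vandermonde formula in the squares, the integrand is `det [φ_i (u_{m-1-j})]` with
`φ_i x = x e^{-x²/2} x^{2i}`. Each column depends on a single coordinate, so integrating over the
box gives the determinant of the one-dimensional integrals of `φ_i` over `(τ_j, τ_{j+1})`.
Integration by parts gives a primitive of `φ_i` equal to `-e^{-x²/2} x^{2i}` plus a combination
of the primitives of lower index, so row reduction turns this into
`(-1)^m det [f_i(τ_{j+1}) - f_i(τ_j)]` with `f_i x = e^{-x²/2} x^{2i}`. Subtracting consecutive
columns of the right-hand side and expanding along its row of ones gives the same determinant.
-/

open MeasureTheory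

namespace Matrix

theorem det_vandermonde_comp_rev {R : Type*} [CommRing R] {n : ℕ} (v : Fin n → R) :
    det (vandermonde (v ∘ Fin.rev)) = ∏ i : Fin n, ∏ j ∈ Finset.Iio i, (v j - v i) := by
  rw [det_vandermonde, ← Equiv.prod_comp Fin.revPerm]
  refine Finset.prod_congr rfl fun i _ => ?_
  refine Finset.prod_equiv Fin.revPerm (fun j => ?_) fun j _ => ?_ <;>
    simp [Fin.rev_lt_iff]

theorem det_of_last_row_one {R α : Type*} [CommRing R] {n : ℕ} (g : ℕ → α → R)
    (τ : Fin (n + 1) → α) :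
    det (of fun i j : Fin (n + 1) => if (i : ℕ) < n then g i (τ j) else 1) =
      (-1) ^ n * det (of fun i j : Fin n => g i (τ j.succ) - g i (τ j.castSucc)) := by
  -- Replace each column but the first by its difference with the previous one; the last row
  -- becomes `(1, 0, …, 0)`.
  set B : Matrix (Fin (n + 1)) (Fin (n + 1)) R := of fun i j =>
    Fin.cases (if (i : ℕ) < n then g i (τ 0) else 1)
      (fun j => if (i : ℕ) < n then g i (τ j.succ) - g i (τ j.castSucc) else 0) j
  have hB : det (of fun i j : Fin (n + 1) => if (i : ℕ) < n then g i (τ j) else 1) = det B :=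
    det_eq_of_forall_col_eq_smul_add_pred (fun _ => 1) (fun i => rfl)
      fun i j => by simp only [B, of_apply, Fin.cases_succ]; split_ifs <;> ring
  rw [hB, det_succ_row B (Fin.last n), Fin.sum_univ_succ,
    Finset.sum_eq_zero fun j _ => by simp [B]]
  have hsub : B.submatrix (Fin.last n).succAbove (Fin.succAbove 0) =
      of fun i j : Fin n => g i (τ j.succ) - g i (τ j.castSucc) := by
    ext i j
    simp [B]
  rw [hsub]
  simp [B]

end Matrix

theorem setIntegral_univ_pi_det {𝕜 ι n α : Type*} [RCLike 𝕜] [Fintype ι] [Fintype n]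
    [DecidableEq n] [MeasurableSpace α] {μ : ι → Measure α} [∀ i, SigmaFinite (μ i)]
    (s : ι → Set α) (e : n ≃ ι) (F : n → n → α → 𝕜)
    (hF : ∀ i j, IntegrableOn (F i j) (s (e j)) (μ (e j))) :
    ∫ u in Set.univ.pi s, (Matrix.of fun i j => F i j (u (e j))).det ∂Measure.pi μ =
      (Matrix.of fun i j => ∫ x in s (e j), F i j x ∂μ (e j)).det := by
  have hprod (σ : Equiv.Perm n) (u : ι → α) :
      ∏ j, F (σ j) j (u (e j)) = ∏ k, F (σ (e.symm k)) (e.symm k) (u k) := by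
    rw [← e.prod_comp]; simp
  simp only [Measure.restrict_pi_pi, Matrix.det_apply, Matrix.of_apply, hprod, Units.smul_def,
    zsmul_eq_mul]
  rw [integral_finsetSum]
  · refine Finset.sum_congr rfl fun σ _ => ?_
    rw [integral_const_mul, integral_fintype_prod_eq_prod, ← e.prod_comp]
    simp
  · exact fun σ _ => (Integrable.fintype_prod fun k => by
      simpa [IntegrableOn] using hF (σ (e.symm k)) (e.symm k)).const_mul _

noncomputable def gaussEven (q : ℕ) (x : ℝ) : ℝ := Real.exp (-x ^ 2 / 2) * (x ^ 2) ^ q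

noncomputable def gaussOdd (q : ℕ) (x : ℝ) : ℝ := x * gaussEven q x

-- Integration by parts:
-- `∫ x e^{-x²/2} x^{2q+2} = -e^{-x²/2} x^{2q+2} + (2q+2) ∫ x e^{-x²/2} x^{2q}`.
noncomputable def gaussOddPrimitive : ℕ → ℝ → ℝ
  | 0 => fun x => -gaussEven 0 x
  | q + 1 => fun x => -gaussEven (q + 1) x + 2 * (q + 1) * gaussOddPrimitive q x

theorem continuous_gaussOdd (q : ℕ) : Continuous (gaussOdd q) := by
  unfold gaussOdd gaussEven; fun_prop

theorem hasDerivAt_gaussEven (q : ℕ) (x : ℝ) :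
    HasDerivAt (gaussEven q) (2 * q * gaussOdd (q - 1) x - gaussOdd q x) x := by
  have hexp : HasDerivAt (fun y => Real.exp (-y ^ 2 / 2)) (Real.exp (-x ^ 2 / 2) * -x) x :=
    ((hasDerivAt_pow 2 x).neg.div_const 2).exp.congr_deriv (by norm_num; ring)
  have hpow : HasDerivAt (fun y : ℝ => (y ^ 2) ^ q) (q * (x ^ 2) ^ (q - 1) * (2 * x)) x :=
    ((hasDerivAt_pow 2 x).pow q).congr_deriv (by norm_num)
  exact (hexp.mul hpow).congr_deriv (by simp only [gaussOdd, gaussEven]; ring)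

theorem hasDerivAt_gaussOddPrimitive (q : ℕ) (x : ℝ) :
    HasDerivAt (gaussOddPrimitive q) (gaussOdd q x) x := by
  induction q with
  | zero => refine (hasDerivAt_gaussEven 0 x).neg.congr_deriv ?_; simp
  | succ q ih =>
    refine ((hasDerivAt_gaussEven (q + 1) x).neg.add
      (ih.const_mul (2 * ((q : ℝ) + 1)))).congr_deriv ?_
    push_cast
    ring

theorem setIntegral_Ioo_gaussOdd {a b : ℝ} (hab : a ≤ b) (q : ℕ) :
    ∫ x in Set.Ioo a b, gaussOdd q x = gaussOddPrimitive q b - gaussOddPrimitive q a := by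
  rw [← integral_Ioc_eq_integral_Ioo, ← intervalIntegral.integral_of_le hab]
  exact intervalIntegral.integral_eq_sub_of_hasDerivAt
    (fun x _ => hasDerivAt_gaussOddPrimitive q x) ((continuous_gaussOdd q).intervalIntegrable a b)

theorem det_gaussOddPrimitive_sub {n : ℕ} (a b : Fin n → ℝ) :
    (Matrix.of fun i j : Fin n => gaussOddPrimitive i (b j) - gaussOddPrimitive i (a j)).det =
      (-1) ^ n * (Matrix.of fun i j : Fin n => gaussEven i (b j) - gaussEven i (a j)).det := by
  cases n with
  | zero => simp
  | succ n =>
    rw [Matrix.det_eq_of_forall_row_eq_smul_add_pred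
      (B := -Matrix.of fun i j : Fin (n + 1) => gaussEven i (b j) - gaussEven i (a j))
      (fun i => 2 * ((i : ℝ) + 1)) (fun j => ?_) fun i j => ?_, Matrix.det_neg, Fintype.card_fin]
    all_goals
      simp only [Matrix.of_apply, Matrix.neg_apply, Fin.coe_ofNat_eq_mod, Nat.zero_mod,
        Fin.val_succ, Fin.val_castSucc, gaussOddPrimitive]
      ring

theorem det_gaussOdd_comp_rev {m : ℕ} (u : Fin m → ℝ) :
    (Matrix.of fun i j : Fin m => gaussOdd i (u (Fin.rev j))).det =
      (∏ k, u k * Real.exp (-u k ^ 2 / 2)) * ∏ k, ∏ j ∈ Finset.Iio k, (u j ^ 2 - u k ^ 2) := by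
  have hV : (Matrix.of fun i j : Fin m => gaussOdd i (u (Fin.rev j))).transpose =
      Matrix.of fun j i => u (Fin.rev j) * Real.exp (-u (Fin.rev j) ^ 2 / 2) *
        Matrix.vandermonde ((fun k => u k ^ 2) ∘ Fin.rev) j i := by
    ext j i
    simp only [Matrix.transpose_apply, Matrix.of_apply, Matrix.vandermonde_apply,
      Function.comp_apply, gaussOdd, gaussEven]
    ring
  rw [← Matrix.det_transpose, hV, Matrix.det_mul_column, Matrix.det_vandermonde_comp_rev]
  exact congrArg (· * _) (Equiv.prod_comp Fin.revPerm fun k => u k * Real.exp (-u k ^ 2 / 2))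

theorem gauss_odd_integrate_even_general (m : ℕ) (t : ℕ → ℝ)
    (hdec : ∀ i, 1 ≤ i → i < m + 1 → t (i + 1) ≤ t i) :
    (∫ u in {u : Fin m → ℝ | ∀ i : Fin m,
        t ((i : ℕ) + 2) < u i ∧ u i < t ((i : ℕ) + 1)},
      (∏ k : Fin m, u k * Real.exp (-(u k) ^ 2 / 2)) *
        ∏ k : Fin m, ∏ j ∈ Finset.Iio k, ((u j) ^ 2 - (u k) ^ 2)) =
    Matrix.det (Matrix.of fun i j : Fin (m + 1) =>
      if (i : ℕ) < m then
        Real.exp (-(t (m + 1 - (j : ℕ))) ^ 2 / 2) * (t (m + 1 - (j : ℕ))) ^ (2 * (i : ℕ))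
      else 1) := by
  set τ : Fin (m + 1) → ℝ := fun j => t (m + 1 - j)
  have hbox : {u : Fin m → ℝ | ∀ i : Fin m, t (i + 2) < u i ∧ u i < t (i + 1)} =
      Set.univ.pi fun i : Fin m => Set.Ioo (t (i + 2)) (t (i + 1)) := by
    ext; simp [Set.mem_pi]
  have hcol (i j : Fin m) :
      ∫ x in Set.Ioo (t (Fin.rev j + 2)) (t (Fin.rev j + 1)), gaussOdd i x =
        gaussOddPrimitive i (τ j.succ) - gaussOddPrimitive i (τ j.castSucc) := by
    have hrev : (Fin.rev j : ℕ) = m - (j + 1) := Fin.val_rev j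
    rw [setIntegral_Ioo_gaussOdd (hdec _ (by omega) (by omega))]
    simp only [τ, hrev, Fin.val_succ, Fin.val_castSucc]
    congr 3 <;> omega
  have hrhs : (Matrix.of fun i j : Fin (m + 1) => if (i : ℕ) < m then
        Real.exp (-(t (m + 1 - (j : ℕ))) ^ 2 / 2) * (t (m + 1 - (j : ℕ))) ^ (2 * (i : ℕ))
      else 1) =
        Matrix.of fun i j : Fin (m + 1) => if (i : ℕ) < m then gaussEven i (τ j) else 1 := by
    simp only [gaussEven, pow_mul, τ]
  rw [hbox, hrhs, Matrix.det_of_last_row_one, ← det_gaussOddPrimitive_sub]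
  simp_rw [← det_gaussOdd_comp_rev]
  rw [volume_pi]
  exact (setIntegral_univ_pi_det _ Fin.revPerm (fun i _ => gaussOdd i) fun i _ =>
    (continuous_gaussOdd i).integrableOn_Icc.mono_set Set.Ioo_subset_Icc_self).trans
    (congrArg _ (Matrix.ext hcol))

/-- Gauss case, odd order `n = 2m+1`, integrating out the even-indexed
singular values over the interlacing box `s_k ∈ (t_{k+1}, t_k)` gives an `(m+1)×(m+1)`
determinant with columns indexed by `τ_j = t_{m+2-j}`, rows `e^{-τ²/2} τ^{2(i-1)}` and
a final row of ones. -/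
theorem gauss_odd_integrate_even (m : ℕ) (hm : 1 ≤ m) (t : ℕ → ℝ)
    (hdec : ∀ i, 1 ≤ i → i < m + 1 → t (i + 1) ≤ t i) (htm : 0 ≤ t (m + 1)) :
    (∫ u in {u : Fin m → ℝ | ∀ i : Fin m,
        t ((i : ℕ) + 2) < u i ∧ u i < t ((i : ℕ) + 1)},
      (∏ k : Fin m, u k * Real.exp (-(u k) ^ 2 / 2)) *
        ∏ k : Fin m, ∏ j ∈ Finset.Iio k, ((u j) ^ 2 - (u k) ^ 2)) =
    Matrix.det (Matrix.of fun i j : Fin (m + 1) =>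
      if (i : ℕ) < m then
        Real.exp (-(t (m + 1 - (j : ℕ))) ^ 2 / 2) * (t (m + 1 - (j : ℕ))) ^ (2 * (i : ℕ))
      else 1) :=
  gauss_odd_integrate_even_general m t hdec
end

section
/- Let m ≥ 1 and let ∞ > s₁ ≥ s₂ ≥ ⋯ ≥ s_m ≥ 0 be real numbers. Then the iterated integral ∫_{s₁}^{∞} dt₁ ∫_{s₂}^{s₁} dt₂ ⋯ ∫_{s_m}^{s_{m−1}} dt_m ∏_{k=1}^{m} t_k e^{−t_k²/2} · ∏_{1≤j<k≤m} (t_j² − t_k²) equals ∏_{k=1}^{m} e^{−s_k²/2} · ∏_{1≤j<k≤m} (s_j² − s_k²). -/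
open MeasureTheory

/-!
On the box `univ.pi I`, with `I₀ = (s₁, ∞)` and `Iᵢ = (s_{i+1}, s_i)`, the integrand is the
determinant `det [f_k(t_j)]` with `f_k(t) = t e^{-t²/2} (-t²)^k` (a Vandermonde determinant in
the `-t_j²`, scaled row by row). Since row `j` depends only on `t_j`, integrating over the box
gives `det [∫_{I_j} f_k]`. With `Q_k` the monic polynomial of degree `k` solving
`Q_k + 2 Q_k' = X^k`, the function `P_k(t) = e^{-t²/2} Q_k(-t²)` satisfies `P_k' = -f_k` and
`P_k(∞) = 0`, so row `j` is `P(s_{j+1}) - P(s_j)` (with `P(s_0) = 0`). Adding the rows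
successively turns this into `det [P_k(s_{j+1})]`, which is again a scaled Vandermonde
determinant in the `-s_j²`, because the `Q_k` are monic of degree `k`.
-/

section DetIntegral

variable {ι α 𝕜 : Type*} [Fintype ι] [DecidableEq ι] [RCLike 𝕜] [MeasurableSpace α]

theorem integral_det_eq_det_integral {μ : ι → Measure α} [∀ i, SigmaFinite (μ i)]
    (g : ι → ι → α → 𝕜) (hg : ∀ i j, Integrable (g i j) (μ i)) :
    ∫ t, (Matrix.of fun i j => g i j (t i)).det ∂(Measure.pi μ) =
      (Matrix.of fun i j => ∫ x, g i j x ∂(μ i)).det := by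
  simp_rw [← Matrix.det_transpose (Matrix.of _), Matrix.det_apply, Matrix.transpose_apply,
    Matrix.of_apply, Units.smul_def, ← Int.cast_smul_eq_zsmul 𝕜, smul_eq_mul]
  rw [integral_finsetSum _ fun σ _ => (Integrable.fintype_prod fun i => hg i (σ i)).const_mul _]
  refine Finset.sum_congr rfl fun σ _ => ?_
  rw [integral_const_mul, integral_fintype_prod_eq_prod]

end DetIntegral

theorem Matrix.det_of_sub_pred_row {R : Type*} [CommRing R] {n : ℕ} (b : ℕ → Fin n → R)
    (hb : b 0 = 0) :
    (Matrix.of fun (i : Fin n) j => b (i + 1) j - b i j).det =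
      (Matrix.of fun (i : Fin n) j => b (i + 1) j).det := by
  cases n with
  | zero => simp
  | succ n =>
    refine (Matrix.det_eq_of_forall_row_eq_smul_add_pred (fun _ => 1) (fun j => ?_)
      fun i j => ?_).symm
    · simp [hb]
    · simp

theorem Matrix.det_vandermonde_neg_sq {R : Type*} [CommRing R] {n : ℕ} (x : Fin n → R) :
    (Matrix.vandermonde fun i => -x i ^ 2).det =
      ∏ k, ∏ j ∈ Finset.Iio k, (x j ^ 2 - x k ^ 2) := by
  rw [Matrix.det_vandermonde, Finset.prod_comm' (t' := Finset.univ) (s' := fun k => Finset.Iio k)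
    (by simp [and_comm])]
  simp_rw [neg_sub_neg]

theorem Finset.prod_Ico_one_eq_prod_range {M : Type*} [CommMonoid M] (n : ℕ) (f : ℕ → M) :
    ∏ i ∈ Finset.Ico 1 (n + 1), f i = ∏ i ∈ Finset.range n, f (i + 1) := by
  rw [Finset.prod_Ico_eq_prod_range]
  simp [add_comm]

theorem Finset.prod_Icc_one_eq_prod_fin {M : Type*} [CommMonoid M] (n : ℕ) (f : ℕ → M) :
    ∏ i ∈ Finset.Icc 1 n, f i = ∏ i : Fin n, f (i + 1) := by
  rw [← Finset.Ico_add_one_right_eq_Icc, Finset.prod_Ico_one_eq_prod_range,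
    Fin.prod_univ_eq_prod_range (fun i => f (i + 1))]

theorem Fin.prod_Iio_eq_prod_Ico_one {M : Type*} [CommMonoid M] {n : ℕ} (k : Fin n)
    (f : ℕ → M) :
    ∏ j ∈ Finset.Iio k, f (j + 1) = ∏ j ∈ Finset.Ico 1 ((k : ℕ) + 1), f j := by
  rw [Finset.prod_Ico_one_eq_prod_range, ← Nat.Iio_eq_range, ← Fin.map_valEmbedding_Iio,
    Finset.prod_map]
  rfl

section OddGauss

open Filter Polynomial Set Topology

noncomputable def oddGaussPoly : ℕ → ℝ[X]
  | 0 => 1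
  | k + 1 => X ^ (k + 1) - C (2 * (k + 1) : ℝ) * oddGaussPoly k

theorem oddGaussPoly_add_two_mul_derivative (k : ℕ) :
    oddGaussPoly k + C 2 * derivative (oddGaussPoly k) = X ^ k := by
  induction k with
  | zero => simp [oddGaussPoly]
  | succ k ih =>
    rw [oddGaussPoly, derivative_sub, derivative_X_pow, derivative_C_mul]
    simp only [add_tsub_cancel_right, Nat.cast_add, Nat.cast_one, map_mul, map_add, map_one,
      map_natCast]
    linear_combination (-(C 2 * ((k : ℝ[X]) + 1))) * ih

theorem natDegree_oddGaussPoly (k : ℕ) : (oddGaussPoly k).natDegree = k := by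
  induction k with
  | zero => simp [oddGaussPoly]
  | succ k ih =>
    rw [oddGaussPoly, natDegree_sub_eq_left_of_natDegree_lt, natDegree_X_pow]
    rw [natDegree_X_pow]
    exact (natDegree_C_mul_le _ _).trans_lt (by omega)

theorem monic_oddGaussPoly (k : ℕ) : (oddGaussPoly k).Monic := by
  cases k with
  | zero => exact monic_one
  | succ k =>
    refine (monic_X_pow (k + 1)).sub_of_left (degree_lt_degree ?_)
    rw [natDegree_X_pow]
    exact (natDegree_C_mul_le _ _).trans_lt (by rw [natDegree_oddGaussPoly]; omega)

noncomputable def oddGaussMonomial (k : ℕ) (t : ℝ) : ℝ :=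
  t * Real.exp (-t ^ 2 / 2) * (-t ^ 2) ^ k

noncomputable def oddGaussPrimitive (k : ℕ) (t : ℝ) : ℝ :=
  Real.exp (-t ^ 2 / 2) * (oddGaussPoly k).eval (-t ^ 2)

theorem hasDerivAt_oddGaussPrimitive (k : ℕ) (t : ℝ) :
    HasDerivAt (oddGaussPrimitive k) (-oddGaussMonomial k t) t := by
  have hsq : HasDerivAt (fun t : ℝ => -t ^ 2) (-(2 * t)) t := by
    simpa using (hasDerivAt_pow 2 t).fun_neg
  have hkey := congrArg (eval (-t ^ 2)) (oddGaussPoly_add_two_mul_derivative k)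
  simp only [eval_add, eval_mul, eval_C, eval_pow, eval_X] at hkey
  refine ((hsq.div_const 2).exp.mul
    (((oddGaussPoly k).hasDerivAt (-t ^ 2)).comp t hsq)).congr_deriv ?_
  rw [oddGaussMonomial, ← hkey]
  simp only [Function.comp_apply]
  ring

theorem tendsto_oddGaussPrimitive_atTop (k : ℕ) :
    Tendsto (oddGaussPrimitive k) atTop (𝓝 0) := by
  have hsq : Tendsto (fun t : ℝ => t ^ 2 / 2) atTop atTop :=
    (tendsto_pow_atTop two_ne_zero).atTop_div_const two_pos
  refine ((tendsto_div_exp_atTop ((oddGaussPoly k).comp (-(C 2 * X)))).comp hsq).congr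
    fun t => ?_
  rw [oddGaussPrimitive, neg_div, Real.exp_neg]
  simp only [Function.comp_apply, eval_comp, eval_neg, eval_mul, eval_C, eval_X]
  ring_nf

theorem integrable_oddGaussMonomial (k : ℕ) : Integrable (oddGaussMonomial k) := by
  have h := (integrable_rpow_mul_exp_neg_mul_sq (b := 1 / 2) (by norm_num)
    (s := ((2 * k + 1 : ℕ) : ℝ)) (neg_one_lt_zero.trans_le (Nat.cast_nonneg _))).const_mul
      ((-1) ^ k)
  refine h.congr (ae_of_all _ fun t => ?_)
  simp only [Real.rpow_natCast, oddGaussMonomial, neg_pow (t ^ 2), ← pow_mul]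
  rw [show -(1 / 2) * t ^ 2 = -t ^ 2 / 2 by ring]
  ring

theorem integral_Ioi_oddGaussMonomial (k : ℕ) (a : ℝ) :
    ∫ x in Ioi a, oddGaussMonomial k x = oddGaussPrimitive k a := by
  have h := integral_Ioi_of_hasDerivAt_of_tendsto
    (hasDerivAt_oddGaussPrimitive k a).continuousAt.continuousWithinAt
    (fun x _ => hasDerivAt_oddGaussPrimitive k x) (integrable_oddGaussMonomial k).neg.integrableOn
    (tendsto_oddGaussPrimitive_atTop k)
  rwa [integral_neg, zero_sub, neg_inj] at h

theorem integral_Ioo_oddGaussMonomial (k : ℕ) {a b : ℝ} (hab : a ≤ b) :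
    ∫ x in Ioo a b, oddGaussMonomial k x = oddGaussPrimitive k a - oddGaussPrimitive k b := by
  rw [← integral_Ioc_eq_integral_Ioo, ← intervalIntegral.integral_of_le hab, ← neg_sub,
    ← intervalIntegral.integral_eq_sub_of_hasDerivAt (fun x _ => hasDerivAt_oddGaussPrimitive k x)
      (integrable_oddGaussMonomial k).neg.intervalIntegrable,
    intervalIntegral.integral_neg, neg_neg]

theorem det_oddGaussMonomial {n : ℕ} (t : Fin n → ℝ) :
    (Matrix.of fun j (k : Fin n) => oddGaussMonomial k (t j)).det =
      (∏ k, t k * Real.exp (-t k ^ 2 / 2)) *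
        ∏ k, ∏ j ∈ Finset.Iio k, (t j ^ 2 - t k ^ 2) := by
  rw [← Matrix.det_vandermonde_neg_sq, ← Matrix.det_mul_column]
  rfl

theorem det_oddGaussPrimitive {n : ℕ} (x : Fin n → ℝ) :
    (Matrix.of fun j (k : Fin n) => oddGaussPrimitive k (x j)).det =
      (∏ k, Real.exp (-x k ^ 2 / 2)) * ∏ k, ∏ j ∈ Finset.Iio k, (x j ^ 2 - x k ^ 2) := by
  rw [← Matrix.det_vandermonde_neg_sq, Matrix.det_eval_matrixOfPolynomials_eq_det_vandermonde _
    (fun k => oddGaussPoly k) (fun k => natDegree_oddGaussPoly k) (fun k => monic_oddGaussPoly k),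
    ← Matrix.det_mul_column]
  rfl

def interlacingInterval (s : ℕ → ℝ) (i : ℕ) : Set ℝ :=
  if i = 0 then Ioi (s 1) else Ioo (s (i + 1)) (s i)

theorem mem_interlacingInterval {s : ℕ → ℝ} {i : ℕ} {x : ℝ} :
    x ∈ interlacingInterval s i ↔ s (i + 1) < x ∧ (0 < i → x < s i) := by
  rcases Nat.eq_zero_or_pos i with rfl | hi
  · simp [interlacingInterval]
  · simp [interlacingInterval, hi.ne', hi]

/-- `s 0` stands for `+∞`, where the primitive vanishes. -/
noncomputable def oddGaussPrimitiveAt (s : ℕ → ℝ) (k i : ℕ) : ℝ :=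
  if i = 0 then 0 else oddGaussPrimitive k (s i)

theorem integral_interlacingInterval_oddGaussMonomial (s : ℕ → ℝ) (k i : ℕ)
    (hs : 0 < i → s (i + 1) ≤ s i) :
    ∫ x in interlacingInterval s i, oddGaussMonomial k x =
      oddGaussPrimitiveAt s k (i + 1) - oddGaussPrimitiveAt s k i := by
  rcases Nat.eq_zero_or_pos i with rfl | hi
  · simp [interlacingInterval, oddGaussPrimitiveAt, integral_Ioi_oddGaussMonomial]
  · simp [interlacingInterval, oddGaussPrimitiveAt, hi.ne',
      integral_Ioo_oddGaussMonomial k (hs hi)]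

end OddGauss

theorem gauss_even_integrate_odd_general (m : ℕ) (s : ℕ → ℝ)
    (hdec : ∀ i, 1 ≤ i → i < m → s (i + 1) ≤ s i) :
    (∫ t in {t : Fin m → ℝ | ∀ i : Fin m,
        s ((i : ℕ) + 1) < t i ∧ (0 < (i : ℕ) → t i < s (i : ℕ))},
      (∏ k : Fin m, t k * Real.exp (-(t k) ^ 2 / 2)) *
        ∏ k : Fin m, ∏ j ∈ Finset.Iio k, ((t j) ^ 2 - (t k) ^ 2)) =
    (∏ k ∈ Finset.Icc 1 m, Real.exp (-(s k) ^ 2 / 2)) *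
      ∏ k ∈ Finset.Icc 1 m, ∏ j ∈ Finset.Ico 1 k, ((s j) ^ 2 - (s k) ^ 2) := by
  have hbox :
      {t : Fin m → ℝ | ∀ i : Fin m, s (i + 1) < t i ∧ (0 < (i : ℕ) → t i < s i)} =
      Set.univ.pi fun i : Fin m => interlacingInterval s i := by
    ext t; simp [mem_interlacingInterval]
  have hrows :
      (Matrix.of fun (i k : Fin m) => ∫ x in interlacingInterval s i, oddGaussMonomial k x) =
        Matrix.of fun (i k : Fin m) =>
          oddGaussPrimitiveAt s k (i + 1) - oddGaussPrimitiveAt s k i := by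
    ext i k
    exact integral_interlacingInterval_oddGaussMonomial s k i fun hi => hdec i hi i.isLt
  simp_rw [hbox, ← det_oddGaussMonomial, volume_pi, Measure.restrict_pi_pi]
  rw [integral_det_eq_det_integral (fun (_ k : Fin m) => oddGaussMonomial k)
      fun _ k => (integrable_oddGaussMonomial k).integrableOn,
    hrows, Matrix.det_of_sub_pred_row (fun i (k : Fin m) => oddGaussPrimitiveAt s k i)
      (by ext; simp [oddGaussPrimitiveAt])]
  simp only [oddGaussPrimitiveAt, Nat.add_one_ne_zero, if_false]
  rw [det_oddGaussPrimitive (fun i : Fin m => s (i + 1)), Finset.prod_Icc_one_eq_prod_fin,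
    Finset.prod_Icc_one_eq_prod_fin]
  congr 1
  exact Finset.prod_congr rfl fun k _ =>
    Fin.prod_Iio_eq_prod_Ico_one k fun j => s j ^ 2 - s (k + 1) ^ 2

/-- Gauss case, even order.  Integrating the odd-indexed singular-value
density `∏ t_k e^{-t_k²/2} ∏_{j<k}(t_j² - t_k²)` over the interlacing box
`t₁ ∈ (s₁,∞), t_k ∈ (s_k, s_{k-1})` yields `∏ e^{-s_k²/2} ∏_{j<k}(s_j² - s_k²)`. -/
theorem gauss_even_integrate_odd (m : ℕ) (hm : 1 ≤ m) (s : ℕ → ℝ)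
    (hdec : ∀ i, 1 ≤ i → i < m → s (i + 1) ≤ s i) (hsm : 0 ≤ s m) :
    (∫ t in {t : Fin m → ℝ | ∀ i : Fin m,
        s ((i : ℕ) + 1) < t i ∧ (0 < (i : ℕ) → t i < s (i : ℕ))},
      (∏ k : Fin m, t k * Real.exp (-(t k) ^ 2 / 2)) *
        ∏ k : Fin m, ∏ j ∈ Finset.Iio k, ((t j) ^ 2 - (t k) ^ 2)) =
    (∏ k ∈ Finset.Icc 1 m, Real.exp (-(s k) ^ 2 / 2)) *
      ∏ k ∈ Finset.Icc 1 m, ∏ j ∈ Finset.Ico 1 k, ((s j) ^ 2 - (s k) ^ 2) :=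
  gauss_even_integrate_odd_general m s hdec
end
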